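/- arXiv:2212.11493 — 3 statements merged into one kernel-verified Lean document; each statement's English description precedes it below -/
import Mathlib

section
/- Let φ be the PCA-factorised time-discretised Asian average price function in d+1 variables. Then: (i) the partial derivative with respect to the first variable satisfies ∂φ/∂y₀ (y₀, y) > 0 for all (y₀, y) ∈ ℝ^{d+1}, so y₀ ↦ φ(y₀, y) is strictly increasing for every y ∈ ℝ^d; and (ii) for each fixed y ∈ ℝ^d, φ(y₀, y) → ∞ as y₀ → ∞. -/
open Real Filter MeasureTheory Finset

/-- `τ_d = √(T/((d+1)(2d+3)))`. -/
noncomputable def tau (d : ℕ) (T : ℝ) : ℝ :=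
  Real.sqrt (T / (((d : ℝ) + 1) * (2 * (d : ℝ) + 3)))

/-- `χ_i = π(2i+1)/(2(2d+3))`. -/
noncomputable def chi (d i : ℕ) : ℝ := Real.pi * (2 * (i : ℝ) + 1) / (2 * (2 * (d : ℝ) + 3))

/-- Entries of the PCA factor `A`. -/
noncomputable def Amat (d : ℕ) (T : ℝ) (k i : ℕ) : ℝ :=
  tau d T * Real.sin (2 * ((k : ℝ) + 1) * chi d i) / Real.sin (chi d i)

/-- The PCA-factorised time-discretised Asian average price function. -/
noncomputable def phi (d : ℕ) (S0 R σ T : ℝ) (y : Fin (d + 1) → ℝ) : ℝ :=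
  (1 / ((d : ℝ) + 1)) * ∑ k : Fin (d + 1),
    S0 * Real.exp ((R - σ ^ 2 / 2) * ((k : ℝ) + 1) * T / ((d : ℝ) + 1)
      + σ * ∑ i : Fin (d + 1), Amat d T k i * y i)

/-- First-order partial derivative in coordinate `i`. -/
noncomputable def pd (n : ℕ) (i : Fin n) (f : (Fin n → ℝ) → ℝ) : (Fin n → ℝ) → ℝ :=
  fun y => fderiv ℝ f y (Pi.single i 1)

/-- Mixed partial derivative `D^η = ∏_i ∂^{η_i}/∂y_i^{η_i}`. -/
noncomputable def mderiv {n : ℕ} (η : Fin n → ℕ) (f : (Fin n → ℝ) → ℝ) : (Fin n → ℝ) → ℝ :=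
  (List.finRange n).foldr (fun i g => (pd n i)^[η i] g) f

lemma tau_pos (d : ℕ) (T : ℝ) (hT : 0 < T) : 0 < tau d T := by
  apply Real.sqrt_pos.2; positivity

lemma Amat0_pos (d : ℕ) (T : ℝ) (hT : 0 < T) (k : Fin (d+1)) :
    0 < Amat d T k 0 := by
  have hpi := Real.pi_pos
  have hc : chi d 0 = Real.pi / (2 * (2 * (d:ℝ) + 3)) := by
    unfold chi; push_cast; ring
  have hq : 0 < Real.pi / (2 * (2 * (d:ℝ) + 3)) := by positivity
  have hs1 : 0 < Real.sin (chi d 0) := by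
    apply Real.sin_pos_of_pos_of_lt_pi
    · rw [hc]; positivity
    · rw [hc, div_lt_iff₀ (by positivity)]
      nlinarith
  have hk : (k:ℝ) ≤ d := by exact_mod_cast Nat.lt_succ_iff.1 k.isLt
  have hs2 : 0 < Real.sin (2 * ((k:ℝ) + 1) * chi d 0) := by
    apply Real.sin_pos_of_pos_of_lt_pi
    · rw [hc]; positivity
    · rw [hc]
      calc 2 * ((k:ℝ) + 1) * (Real.pi / (2 * (2 * (d:ℝ) + 3)))
          < 2 * (2 * (d:ℝ) + 3) * (Real.pi / (2 * (2 * (d:ℝ) + 3))) := by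
            apply mul_lt_mul_of_pos_right _ hq; nlinarith
        _ = Real.pi := by field_simp
  unfold Amat
  exact div_pos (mul_pos (tau_pos d T hT) hs2) hs1

/-- The linear functional `y ↦ ∑ i, A_{k,i} y_i`. -/
noncomputable def Lk (d : ℕ) (T : ℝ) (k : Fin (d+1)) : (Fin (d+1) → ℝ) →L[ℝ] ℝ :=
  ∑ i : Fin (d+1), Amat d T k i • ContinuousLinearMap.proj i

lemma Lk_apply (d : ℕ) (T : ℝ) (k : Fin (d+1)) (y : Fin (d+1) → ℝ) :
    Lk d T k y = ∑ i : Fin (d+1), Amat d T k i * y i := by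
  simp [Lk]

lemma Lk_single (d : ℕ) (T : ℝ) (k : Fin (d+1)) :
    Lk d T k (Pi.single 0 1) = Amat d T k 0 := by
  rw [Lk_apply, Finset.sum_eq_single (0 : Fin (d+1))]
  · simp
  · intro b _ hb; simp [Pi.single_apply, hb]
  · simp

lemma hasFDerivAt_phi (d : ℕ) (S0 R σ T : ℝ) (z : Fin (d+1) → ℝ) :
    HasFDerivAt (phi d S0 R σ T)
      ((1 / ((d : ℝ) + 1)) • ∑ k : Fin (d + 1),
        S0 • Real.exp ((R - σ ^ 2 / 2) * ((k : ℝ) + 1) * T / ((d : ℝ) + 1)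
          + σ * ∑ i : Fin (d + 1), Amat d T k i * z i) • σ • Lk d T k) z := by
  have h1 : ∀ k : Fin (d+1), HasFDerivAt
      (fun y => S0 * Real.exp ((R - σ ^ 2 / 2) * ((k : ℝ) + 1) * T / ((d : ℝ) + 1)
        + σ * ∑ i : Fin (d + 1), Amat d T k i * y i))
      (S0 • Real.exp ((R - σ ^ 2 / 2) * ((k : ℝ) + 1) * T / ((d : ℝ) + 1)
        + σ * ∑ i : Fin (d + 1), Amat d T k i * z i) • σ • Lk d T k) z := by
    intro k
    have h0 : HasFDerivAt (fun y : Fin (d+1) → ℝ => ∑ i : Fin (d+1), Amat d T k i * y i)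
        (Lk d T k) z := by
      have := (Lk d T k).hasFDerivAt (x := z)
      apply this.congr_of_eventuallyEq
      filter_upwards with y using (Lk_apply d T k y).symm
    exact ((h0.const_mul σ).const_add
        ((R - σ ^ 2 / 2) * ((k : ℝ) + 1) * T / ((d : ℝ) + 1))).exp.const_mul S0
  exact (HasFDerivAt.fun_sum (fun k (_ : k ∈ Finset.univ) => h1 k)).const_mul (1 / ((d : ℝ) + 1))

lemma pd_phi (d : ℕ) (S0 R σ T : ℝ) (z : Fin (d+1) → ℝ) :
    fderiv ℝ (phi d S0 R σ T) z (Pi.single 0 1)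
      = (1 / ((d : ℝ) + 1)) * ∑ k : Fin (d + 1),
        S0 * Real.exp ((R - σ ^ 2 / 2) * ((k : ℝ) + 1) * T / ((d : ℝ) + 1)
          + σ * ∑ i : Fin (d + 1), Amat d T k i * z i) * (σ * Amat d T k 0) := by
  rw [(hasFDerivAt_phi d S0 R σ T z).fderiv]
  simp only [ContinuousLinearMap.smul_apply, ContinuousLinearMap.sum_apply, Lk_single,
    smul_eq_mul, Finset.mul_sum]
  exact Finset.sum_congr rfl fun k _ => by ring

lemma phi_cons (d : ℕ) (S0 R σ T : ℝ) (y : Fin d → ℝ) (t : ℝ) :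
    phi d S0 R σ T (Fin.cons t y) = (1 / ((d : ℝ) + 1)) * ∑ k : Fin (d + 1),
      S0 * Real.exp (((R - σ ^ 2 / 2) * ((k : ℝ) + 1) * T / ((d : ℝ) + 1)
        + σ * ∑ i : Fin d, Amat d T k (i.succ) * y i) + σ * Amat d T k 0 * t) := by
  unfold phi
  congr 1
  apply Finset.sum_congr rfl
  intro k _
  rw [Fin.sum_univ_succ]
  simp only [Fin.cons_zero, Fin.cons_succ, Fin.val_succ, Fin.val_zero]
  exact congrArg (fun x => S0 * Real.exp x) (by ring)

set_option maxHeartbeats 1000000 in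
/-- (i) `∂φ/∂y₀ > 0` everywhere, so `y₀ ↦ φ(y₀,y)` is strictly increasing
for every `y`; (ii) for each fixed `y`, `φ(y₀,y) → ∞` as `y₀ → ∞`. -/
theorem stmt4 (d : ℕ) (hd : 1 ≤ d) (S0 R σ T : ℝ) (hS0 : 0 < S0) (hσ : 0 < σ) (hT : 0 < T) :
    (∀ z : Fin (d + 1) → ℝ, 0 < pd (d + 1) 0 (phi d S0 R σ T) z) ∧
    (∀ y : Fin d → ℝ, StrictMono fun t : ℝ => phi d S0 R σ T (Fin.cons t y)) ∧
    (∀ y : Fin d → ℝ,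
      Filter.Tendsto (fun t : ℝ => phi d S0 R σ T (Fin.cons t y)) Filter.atTop Filter.atTop) := by
  refine ⟨?_, ?_, ?_⟩
  · intro z
    show 0 < fderiv ℝ (phi d S0 R σ T) z (Pi.single 0 1)
    rw [pd_phi]
    apply mul_pos (by positivity)
    apply Finset.sum_pos _ Finset.univ_nonempty
    intro k _
    exact mul_pos (mul_pos hS0 (Real.exp_pos _)) (mul_pos hσ (Amat0_pos d T hT k))
  · intro y a b hab
    simp only [phi_cons]
    apply mul_lt_mul_of_pos_left _ (by positivity)
    apply Finset.sum_lt_sum_of_nonempty Finset.univ_nonempty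
    intro k _
    apply mul_lt_mul_of_pos_left _ hS0
    apply Real.exp_lt_exp.2
    apply add_lt_add_right
    exact mul_lt_mul_of_pos_left hab (mul_pos hσ (Amat0_pos d T hT k))
  · intro y
    have hA := Amat0_pos d T hT 0
    have key : Filter.Tendsto (fun t : ℝ => (1 / ((d : ℝ) + 1)) *
        (S0 * Real.exp ((((R - σ ^ 2 / 2) * (((0 : Fin (d+1)) : ℝ) + 1) * T / ((d : ℝ) + 1))
          + σ * ∑ i : Fin d, Amat d T ((0 : Fin (d+1)) : ℕ) (i.succ) * y i)
          + σ * Amat d T ((0 : Fin (d+1)) : ℕ) 0 * t))) Filter.atTop Filter.atTop := by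
      apply Filter.Tendsto.const_mul_atTop (by positivity)
      apply Filter.Tendsto.const_mul_atTop hS0
      apply Real.tendsto_exp_atTop.comp
      apply tendsto_atTop_add_const_left
      exact Filter.Tendsto.const_mul_atTop (mul_pos hσ hA) tendsto_id
    apply tendsto_atTop_mono _ key
    intro t
    rw [phi_cons]
    apply mul_le_mul_of_nonneg_left _ (by positivity)
    exact Finset.single_le_sum
      (f := fun k : Fin (d+1) => S0 * Real.exp (((R - σ ^ 2 / 2) * ((k : ℝ) + 1) * T / ((d : ℝ) + 1)
        + σ * ∑ i : Fin d, Amat d T k (i.succ) * y i) + σ * Amat d T k 0 * t))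
      (fun k _ => le_of_lt (mul_pos hS0 (Real.exp_pos _))) (Finset.mem_univ (0 : Fin (d+1)))
end

section
/- Let φ be the PCA-factorised time-discretised Asian average price function in d+1 variables. Then for every multi-index α ∈ ℕ₀^{d+1} and every point z ∈ ℝ^{d+1}, the mixed derivative satisfies |D^α φ(z)| ≤ ( ∏_{i=0}^{d} Λ_i^{α_i} ) · φ(z), where Λ_i = σ τ_d (2d+3)/(2i+1). -/
open Real Filter MeasureTheory Finset

/-- general exponential-sum shape -/
noncomputable def gfun (n : ℕ) (μ c : Fin n → ℝ) (B : Fin n → Fin n → ℝ) :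
    (Fin n → ℝ) → ℝ :=
  fun y => ∑ k, c k * Real.exp (μ k + ∑ j, B k j * y j)

noncomputable def lmap (n : ℕ) (B : Fin n → Fin n → ℝ) (k : Fin n) :
    (Fin n → ℝ) →L[ℝ] ℝ :=
  ∑ j, B k j • ContinuousLinearMap.proj j

lemma lmap_apply (n : ℕ) (B : Fin n → Fin n → ℝ) (k : Fin n) (y : Fin n → ℝ) :
    lmap n B k y = ∑ j, B k j * y j := by
  simp [lmap]

lemma pd_gfun (n : ℕ) (μ c : Fin n → ℝ) (B : Fin n → Fin n → ℝ) (i : Fin n) :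
    pd n i (gfun n μ c B) = gfun n μ (fun k => B k i * c k) B := by
  funext y
  have hk : ∀ k : Fin n, HasFDerivAt (fun y => c k * Real.exp (μ k + ∑ j, B k j * y j))
      ((c k * Real.exp (μ k + ∑ j, B k j * y j)) • lmap n B k) y := by
    intro k
    have h0 : (fun y : Fin n → ℝ => μ k + ∑ j, B k j * y j)
        = fun y => μ k + lmap n B k y := by
      funext y; rw [lmap_apply]
    have h1 : HasFDerivAt (fun y : Fin n → ℝ => μ k + ∑ j, B k j * y j) (lmap n B k) y := by
      rw [h0]; exact ((lmap n B k).hasFDerivAt).const_add (μ k)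
    have h2 := h1.exp
    have h3 := h2.const_mul (c k)
    simpa [smul_smul, mul_comm] using h3
  have hsum : HasFDerivAt (gfun n μ c B)
      (∑ k, (c k * Real.exp (μ k + ∑ j, B k j * y j)) • lmap n B k) y :=
    HasFDerivAt.fun_sum (fun k _ => hk k)
  have := hsum.fderiv
  simp only [pd, gfun, this]
  rw [ContinuousLinearMap.sum_apply]
  refine Finset.sum_congr rfl fun k _ => ?_
  have : lmap n B k (Pi.single i 1) = B k i := by
    rw [lmap_apply]
    simp [Pi.single_apply, mul_ite]
  rw [ContinuousLinearMap.smul_apply, this]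
  simp [smul_eq_mul]; ring

lemma pd_iter_gfun (n : ℕ) (μ c : Fin n → ℝ) (B : Fin n → Fin n → ℝ) (i : Fin n) (m : ℕ) :
    (pd n i)^[m] (gfun n μ c B) = gfun n μ (fun k => B k i ^ m * c k) B := by
  induction m generalizing c with
  | zero => simp [gfun]
  | succ m ih =>
    rw [Function.iterate_succ_apply, pd_gfun, ih]
    have : (fun k => B k i ^ m * (B k i * c k)) = fun k => B k i ^ (m + 1) * c k := by
      funext k; ring
    rw [this]

lemma foldr_gfun (n : ℕ) (α : Fin n → ℕ) (μ c : Fin n → ℝ) (B : Fin n → Fin n → ℝ)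
    (l : List (Fin n)) :
    l.foldr (fun i g => (pd n i)^[α i] g) (gfun n μ c B)
      = gfun n μ (fun k => (l.map (fun i => B k i ^ α i)).prod * c k) B := by
  induction l with
  | nil => simp
  | cons i l ih =>
    rw [List.foldr_cons, ih, pd_iter_gfun]
    have : (fun k => B k i ^ α i * ((l.map (fun i => B k i ^ α i)).prod * c k))
        = fun k => ((List.map (fun i => B k i ^ α i) (i :: l)).prod * c k) := by
      funext k; simp [mul_assoc]
    rw [this]

lemma Amat_bound (d : ℕ) (T : ℝ) (k i : ℕ) (hi : i ≤ d) :
    |Amat d T k i| ≤ tau d T * (2 * (d : ℝ) + 3) / (2 * (i : ℝ) + 1) := by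
  have hπ := Real.pi_pos
  have hiR : (i : ℝ) ≤ d := by exact_mod_cast hi
  have hχpos : 0 < chi d i := by unfold chi; positivity
  have hχle : chi d i ≤ Real.pi / 2 := by
    unfold chi
    rw [div_le_div_iff₀ (by positivity) (by norm_num : (0:ℝ) < 2)]
    nlinarith
  have hsin : (2 * (i : ℝ) + 1) / (2 * (d : ℝ) + 3) ≤ Real.sin (chi d i) := by
    have h := Real.mul_le_sin hχpos.le hχle
    have : 2 / Real.pi * chi d i = (2 * (i : ℝ) + 1) / (2 * (d : ℝ) + 3) := by
      unfold chi; field_simp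
    linarith [this ▸ h]
  have hs0 : 0 < Real.sin (chi d i) := lt_of_lt_of_le (by positivity) hsin
  have htau : 0 ≤ tau d T := Real.sqrt_nonneg _
  have hs1 : |Real.sin (2 * ((k : ℝ) + 1) * chi d i)| ≤ 1 := Real.abs_sin_le_one _
  have habs : |Amat d T k i|
      = tau d T * |Real.sin (2 * ((k : ℝ) + 1) * chi d i)| / Real.sin (chi d i) := by
    unfold Amat
    rw [abs_div, abs_mul, abs_of_nonneg htau, abs_of_pos hs0]
  rw [habs, div_le_div_iff₀ hs0 (by positivity : (0:ℝ) < 2 * (i : ℝ) + 1)]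
  have h1 : tau d T * |Real.sin (2 * ((k : ℝ) + 1) * chi d i)| * (2 * (i : ℝ) + 1)
      ≤ tau d T * (2 * (i : ℝ) + 1) := by
    have := mul_le_mul_of_nonneg_right (mul_le_mul_of_nonneg_left hs1 htau)
      (by positivity : (0:ℝ) ≤ 2 * (i : ℝ) + 1)
    simpa using this
  have h2 : tau d T * (2 * (i : ℝ) + 1) ≤ tau d T * (2 * (d : ℝ) + 3) * Real.sin (chi d i) := by
    have := (div_le_iff₀ (by positivity : (0:ℝ) < 2 * (d : ℝ) + 3)).mp hsin
    nlinarith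
  linarith


/-- `|D^α φ(z)| ≤ (∏_i Λ_i^{α_i}) φ(z)` where `Λ_i = σ τ_d (2d+3)/(2i+1)`. -/
theorem stmt7 (d : ℕ) (hd : 1 ≤ d) (S0 R σ T : ℝ) (hS0 : 0 < S0) (hσ : 0 < σ) (hT : 0 < T)
    (α : Fin (d + 1) → ℕ) (z : Fin (d + 1) → ℝ) :
    |mderiv α (phi d S0 R σ T) z| ≤
      (∏ i : Fin (d + 1), (σ * tau d T * (2 * (d : ℝ) + 3) / (2 * (i : ℝ) + 1)) ^ α i) *
        phi d S0 R σ T z := by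
  set μk : Fin (d + 1) → ℝ := fun k => (R - σ ^ 2 / 2) * ((k : ℝ) + 1) * T / ((d : ℝ) + 1)
    with hμ
  set c : Fin (d + 1) → ℝ := fun _ => S0 / ((d : ℝ) + 1) with hc
  set B : Fin (d + 1) → Fin (d + 1) → ℝ := fun k i => σ * Amat d T k i with hB
  set Λ : Fin (d + 1) → ℝ := fun i => σ * tau d T * (2 * (d : ℝ) + 3) / (2 * (i : ℝ) + 1)
    with hΛ
  have hphi : phi d S0 R σ T = gfun (d + 1) μk c B := by
    funext y
    unfold phi gfun
    rw [Finset.mul_sum]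
    refine Finset.sum_congr rfl fun k _ => ?_
    have harg : σ * ∑ i : Fin (d + 1), Amat d T k i * y i
        = ∑ j : Fin (d + 1), B k j * y j := by
      rw [Finset.mul_sum]
      exact Finset.sum_congr rfl fun j _ => by rw [hB]; ring
    rw [harg, hc, hμ]
    ring
  have hmder : mderiv α (phi d S0 R σ T)
      = gfun (d + 1) μk (fun k => (∏ i, B k i ^ α i) * c k) B := by
    rw [hphi]; unfold mderiv; rw [foldr_gfun]
    have : ∀ k : Fin (d + 1), ((List.finRange (d + 1)).map (fun i => B k i ^ α i)).prod
        = ∏ i, B k i ^ α i := fun k => (Fin.prod_univ_def _).symm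
    simp only [this]
  have hΛnn : ∀ i : Fin (d + 1), 0 ≤ Λ i := by
    intro i; rw [hΛ]
    have h2 : 0 ≤ σ * tau d T * (2 * (d : ℝ) + 3) := by
      unfold tau; positivity
    positivity
  have hBle : ∀ k i : Fin (d + 1), |B k i| ≤ Λ i := by
    intro k i
    rw [hB, hΛ, abs_mul, abs_of_pos hσ]
    have := Amat_bound d T k i (Fin.is_le i)
    calc σ * |Amat d T (k : ℕ) (i : ℕ)|
        ≤ σ * (tau d T * (2 * (d : ℝ) + 3) / (2 * (i : ℝ) + 1)) :=
          mul_le_mul_of_nonneg_left this hσ.le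
      _ = σ * tau d T * (2 * (d : ℝ) + 3) / (2 * (i : ℝ) + 1) := by ring
  have hck : ∀ k : Fin (d + 1), 0 < c k := fun k => by rw [hc]; positivity
  rw [hmder]
  unfold gfun
  calc |∑ k, (∏ i, B k i ^ α i) * c k * Real.exp (μk k + ∑ j, B k j * z j)|
      ≤ ∑ k, |(∏ i, B k i ^ α i) * c k * Real.exp (μk k + ∑ j, B k j * z j)| :=
        Finset.abs_sum_le_sum_abs _ _
    _ ≤ ∑ k, (∏ i, Λ i ^ α i) * (c k * Real.exp (μk k + ∑ j, B k j * z j)) := by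
        refine Finset.sum_le_sum fun k _ => ?_
        rw [abs_mul, abs_mul, abs_of_pos (hck k), abs_of_pos (Real.exp_pos _), mul_assoc]
        refine mul_le_mul_of_nonneg_right ?_ (by positivity)
        rw [Finset.abs_prod]
        refine Finset.prod_le_prod (fun i _ => abs_nonneg _) fun i _ => ?_
        rw [abs_pow]
        exact pow_le_pow_left₀ (abs_nonneg _) (hBle k i) _
    _ = (∏ i, Λ i ^ α i) * phi d S0 R σ T z := by
        rw [← Finset.mul_sum, hphi]; rfl
end

section
/- Let φ be the PCA-factorised time-discretised Asian average price function in d+1 variables. Then for every y = (y₀, …, y_d) ∈ ℝ^{d+1}, φ(y) ≤ Z · ∏_{i=0}^{d} e^{Λ_i |y_i|}, where Z = (1/(d+1)) Σ_{k=0}^{d} S₀ exp( (R − σ²/2)(k+1)T/(d+1) ) and Λ_i = σ τ_d (2d+3)/(2i+1). -/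
open Real Filter MeasureTheory Finset

/-- `φ(y) ≤ Z ∏_i e^{Λ_i |y_i|}` where
`Z = (1/(d+1)) Σ_k S₀ exp((R−σ²/2)(k+1)T/(d+1))` and `Λ_i = σ τ_d (2d+3)/(2i+1)`. -/
theorem stmt9 (d : ℕ) (hd : 1 ≤ d) (S0 R σ T : ℝ) (hS0 : 0 < S0) (hσ : 0 < σ) (hT : 0 < T)
    (y : Fin (d + 1) → ℝ) :
    phi d S0 R σ T y ≤
      ((1 / ((d : ℝ) + 1)) * ∑ k : Fin (d + 1),
          S0 * Real.exp ((R - σ ^ 2 / 2) * ((k : ℝ) + 1) * T / ((d : ℝ) + 1))) *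
        ∏ i : Fin (d + 1),
          Real.exp (σ * tau d T * (2 * (d : ℝ) + 3) / (2 * (i : ℝ) + 1) * |y i|) := by
  have hτ : 0 ≤ tau d T := Real.sqrt_nonneg _
  have hAbound : ∀ (i : Fin (d+1)) (k : ℕ),
      |Amat d T k i| ≤ tau d T * (2 * (d:ℝ) + 3) / (2 * (i:ℝ) + 1) := by
    intro i k
    have hi1 : (0:ℝ) < 2 * (i:ℝ) + 1 := by positivity
    have hd3 : (0:ℝ) < 2 * (d:ℝ) + 3 := by positivity
    have hπ := Real.pi_pos
    have hχpos : 0 < chi d i := by unfold chi; positivity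
    have hχle : chi d i ≤ π / 2 := by
      unfold chi
      rw [div_le_div_iff₀ (by positivity) (by norm_num)]
      have hile : (i:ℝ) ≤ (d:ℝ) := by exact_mod_cast Fin.is_le i
      nlinarith
    have hsin : (2 * (i:ℝ) + 1) / (2 * (d:ℝ) + 3) ≤ Real.sin (chi d i) := by
      have h := Real.mul_le_sin hχpos.le hχle
      have h2 : 2 / π * chi d i = (2 * (i:ℝ) + 1) / (2 * (d:ℝ) + 3) := by
        unfold chi; field_simp
      linarith [h2 ▸ h]
    have hsinpos : 0 < Real.sin (chi d i) := lt_of_lt_of_le (by positivity) hsin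
    have habs : |Amat d T k i| ≤ tau d T / Real.sin (chi d i) := by
      unfold Amat
      rw [abs_div, abs_mul, abs_of_nonneg hτ, abs_of_pos hsinpos]
      calc tau d T * |Real.sin (2 * ((k:ℝ) + 1) * chi d i)| / Real.sin (chi d i)
          ≤ tau d T * 1 / Real.sin (chi d i) := by
            gcongr
            exact abs_le.2 ⟨Real.neg_one_le_sin _, Real.sin_le_one _⟩
        _ = tau d T / Real.sin (chi d i) := by rw [mul_one]
    refine habs.trans ?_
    rw [div_le_div_iff₀ hsinpos hi1]
    have h3 : 2 * (i:ℝ) + 1 ≤ (2 * (d:ℝ) + 3) * Real.sin (chi d i) := by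
      rw [div_le_iff₀ hd3] at hsin; linarith
    nlinarith [mul_le_mul_of_nonneg_left h3 hτ]
  set B : ℝ := ∑ i : Fin (d+1), σ * tau d T * (2 * (d:ℝ) + 3) / (2 * (i:ℝ) + 1) * |y i| with hB
  have hprod : ∏ i : Fin (d+1),
      Real.exp (σ * tau d T * (2 * (d:ℝ) + 3) / (2 * (i:ℝ) + 1) * |y i|) = Real.exp B := by
    rw [hB, Real.exp_sum]
  rw [hprod]
  have hbk : ∀ k : Fin (d+1), σ * ∑ i : Fin (d+1), Amat d T k i * y i ≤ B := by
    intro k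
    rw [Finset.mul_sum, hB]
    apply Finset.sum_le_sum
    intro i _
    have h1 : σ * (Amat d T k i * y i) ≤ σ * (|Amat d T k i| * |y i|) := by
      apply mul_le_mul_of_nonneg_left _ hσ.le
      calc Amat d T k i * y i ≤ |Amat d T k i * y i| := le_abs_self _
        _ = |Amat d T k i| * |y i| := abs_mul _ _
    refine h1.trans ?_
    rw [mul_div_assoc, mul_assoc, mul_assoc]
    apply mul_le_mul_of_nonneg_left _ hσ.le
    rw [← mul_assoc, ← mul_div_assoc]
    exact mul_le_mul_of_nonneg_right (hAbound i k) (abs_nonneg _)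
  unfold phi
  rw [mul_assoc, Finset.sum_mul]
  apply mul_le_mul_of_nonneg_left _ (by positivity)
  apply Finset.sum_le_sum
  intro k _
  rw [Real.exp_add, ← mul_assoc]
  apply mul_le_mul_of_nonneg_left _ (by positivity)
  exact Real.exp_le_exp.2 (hbk k)
end
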